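/- arXiv:1907.08529 — 8 statements merged into one kernel-verified Lean document; each statement's English description precedes it below -/
import Mathlib

section
/- If φ is a multiplier of W (i.e., φf + (1-φ)g ∈ W for all f, g ∈ W), then for every n ∈ ℕ₊, φⁿ is also a multiplier of W. -/
/-!
The multipliers of `W` form a submonoid of `C(Ω, ℂ)`: `1` is one, and
`φψ f + (1 - φψ) g = φ (ψ f + (1 - ψ) g) + (1 - φ) g` shows that products of multipliers are
multipliers.
-/

/-- `φ` is a multiplier of `W`: `φ·f + (1-φ)·g ∈ W` for all `f, g ∈ W`. -/
def IsMultiplier {Ω X : Type*} [TopologicalSpace Ω] [AddCommGroup X] [Module ℂ X]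
    [TopologicalSpace X] [IsTopologicalAddGroup X] [ContinuousSMul ℂ X]
    (φ : C(Ω, ℂ)) (W : Set C(Ω, X)) : Prop :=
  ∀ f ∈ W, ∀ g ∈ W, φ • f + (1 - φ) • g ∈ W

theorem smul_add_one_sub_smul_mul {R M : Type*} [CommRing R] [AddCommGroup M] [Module R M]
    (a b : R) (x y : M) :
    a • (b • x + (1 - b) • y) + (1 - a) • y = (a * b) • x + (1 - a * b) • y := by
  module

namespace IsMultiplier

variable {Ω X : Type*} [TopologicalSpace Ω] [AddCommGroup X] [Module ℂ X]
  [TopologicalSpace X] [IsTopologicalAddGroup X] [ContinuousSMul ℂ X]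
  {W : Set C(Ω, X)}

theorem one : IsMultiplier (1 : C(Ω, ℂ)) W := fun f hf g _ => by
  convert hf using 1
  ext x
  simp

theorem mul {φ ψ : C(Ω, ℂ)} (hφ : IsMultiplier φ W) (hψ : IsMultiplier ψ W) :
    IsMultiplier (φ * ψ) W := fun f hf g hg => by
  -- The action in `IsMultiplier` is `ContinuousMap.instSMul'`, which agrees with the one of
  -- `ContinuousMap.module'` only after unfolding, so `rw`/`simp` cannot use the module identity.
  have key : φ • (ψ • f + (1 - ψ) • g) + (1 - φ) • g = (φ * ψ) • f + (1 - φ * ψ) • g :=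
    smul_add_one_sub_smul_mul φ ψ f g
  exact key ▸ hφ _ (hψ f hf g hg) g hg

theorem pow {φ : C(Ω, ℂ)} (hφ : IsMultiplier φ W) (n : ℕ) : IsMultiplier (φ ^ n) W := by
  induction n with
  | zero => simpa only [pow_zero] using one
  | succ n ih => simpa only [pow_succ'] using hφ.mul ih

end IsMultiplier

theorem multiplier_pow {Ω X : Type*} [TopologicalSpace Ω] [AddCommGroup X] [Module ℂ X]
    [TopologicalSpace X] [IsTopologicalAddGroup X] [ContinuousSMul ℂ X]
    (φ : C(Ω, ℂ)) (W : Set C(Ω, X)) (h : IsMultiplier φ W) :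
    ∀ n : ℕ, 0 < n → IsMultiplier (φ ^ n) W :=
  fun n _ => h.pow n
end

section
/- Let A be a subalgebra of the bounded continuous complex-valued functions on Ω, and let S ⊆ Ω be such that every f ∈ A with f(S) ⊆ [0,1] is constant on S. Then every f ∈ A which is real-valued on S is constant on S. -/
/-! Squaring and rescaling by `(‖f * f‖ + 1)⁻¹` sends a function real on `S` into `[0, 1]` on `S`,
so `f ^ 2` is constant on `S`. Applying this to `f` and to `f + f ^ 2` makes `f ^ 3` constant
as well, and `a ^ 2 = b ^ 2`, `a ^ 3 = b ^ 3` force `a = b`. -/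

lemma eq_of_sq_eq_of_pow_three_eq {M : Type*} [CommMonoidWithZero M] [IsCancelMulZero M] {a b : M}
    (h2 : a ^ 2 = b ^ 2) (h3 : a ^ 3 = b ^ 3) : a = b := by
  by_cases ha : a = 0
  · subst ha
    exact (pow_eq_zero_iff two_ne_zero).mp (h2.symm.trans (zero_pow two_ne_zero)) |>.symm
  · have : a * a ^ 2 = b * a ^ 2 := by rw [← pow_succ', h3, h2, pow_succ']
    exact mul_right_cancel₀ (pow_ne_zero 2 ha) this

namespace BoundedContinuousFunction

variable {Ω : Type*} [TopologicalSpace Ω] {A : Set (Ω →ᵇ ℂ)} {S : Set Ω}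

lemma eq_on_of_nonneg_real (hsmul : ∀ (c : ℂ), ∀ f ∈ A, c • f ∈ A)
    (hanti : ∀ f ∈ A, (∀ x ∈ S, ∃ r ∈ Set.Icc (0 : ℝ) 1, f x = (r : ℂ)) →
      ∀ x ∈ S, ∀ y ∈ S, f x = f y)
    {f : Ω →ᵇ ℂ} (hf : f ∈ A) (hnonneg : ∀ x ∈ S, ∃ r : ℝ, 0 ≤ r ∧ f x = r) :
    ∀ x ∈ S, ∀ y ∈ S, f x = f y := by
  set c : ℝ := (‖f‖ + 1)⁻¹
  have hc : 0 < c := by positivity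
  have hunit : ∀ x ∈ S, ∃ r ∈ Set.Icc (0 : ℝ) 1, ((c : ℂ) • f) x = r := by
    intro x hx
    obtain ⟨r, hr, hfx⟩ := hnonneg x hx
    have hr_le : r ≤ ‖f‖ := by
      simpa [hfx, Complex.norm_real, abs_of_nonneg hr] using norm_coe_le_norm f x
    refine ⟨c * r, ⟨by positivity, ?_⟩, by simp [hfx]⟩
    rw [inv_mul_le_iff₀ (by positivity)]
    linarith
  intro x hx y hy
  have := hanti _ (hsmul _ _ hf) hunit x hx y hy
  simp only [coe_smul, smul_eq_mul] at this
  exact mul_left_cancel₀ (by exact_mod_cast hc.ne') this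

lemma eq_on_sq_of_im_eq_zero (hmul : ∀ f ∈ A, ∀ g ∈ A, f * g ∈ A)
    (hsmul : ∀ (c : ℂ), ∀ f ∈ A, c • f ∈ A)
    (hanti : ∀ f ∈ A, (∀ x ∈ S, ∃ r ∈ Set.Icc (0 : ℝ) 1, f x = (r : ℂ)) →
      ∀ x ∈ S, ∀ y ∈ S, f x = f y)
    {f : Ω →ᵇ ℂ} (hf : f ∈ A) (hreal : ∀ x ∈ S, (f x).im = 0) :
    ∀ x ∈ S, ∀ y ∈ S, f x ^ 2 = f y ^ 2 := by
  have hsq : ∀ x ∈ S, ∃ r : ℝ, 0 ≤ r ∧ (f * f) x = r := by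
    intro x hx
    obtain ⟨r, hr⟩ : ∃ r : ℝ, f x = r := ⟨(f x).re, Complex.ext rfl (by simp [hreal x hx])⟩
    refine ⟨r ^ 2, sq_nonneg r, ?_⟩
    rw [coe_mul, Pi.mul_apply, hr]
    push_cast
    ring
  simpa only [coe_mul, Pi.mul_apply, sq] using eq_on_of_nonneg_real hsmul hanti (hmul f hf f hf) hsq

end BoundedContinuousFunction

open BoundedContinuousFunction in
/-- If every `f ∈ A` mapping `S` into `[0,1]` is constant on `S`, then every `f ∈ A`
real-valued on `S` is constant on `S`, for a subalgebra `A` of bounded continuous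
complex functions. -/
theorem antisym_real_of_antisym_unit {Ω : Type*} [TopologicalSpace Ω]
    (A : Set (BoundedContinuousFunction Ω ℂ)) (S : Set Ω)
    (hadd : ∀ f ∈ A, ∀ g ∈ A, f + g ∈ A)
    (hmul : ∀ f ∈ A, ∀ g ∈ A, f * g ∈ A)
    (hsmul : ∀ (c : ℂ), ∀ f ∈ A, c • f ∈ A)
    (hanti : ∀ f ∈ A, (∀ x ∈ S, ∃ r ∈ Set.Icc (0 : ℝ) 1, f x = (r : ℂ)) →
      ∀ x ∈ S, ∀ y ∈ S, f x = f y) :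
    ∀ f ∈ A, (∀ x ∈ S, (f x).im = 0) → ∀ x ∈ S, ∀ y ∈ S, f x = f y := by
  intro f hf hreal x hx y hy
  have hsq := eq_on_sq_of_im_eq_zero hmul hsmul hanti hf hreal x hx y hy
  have hg : f + f * f ∈ A := hadd f hf _ (hmul f hf f hf)
  have hgreal : ∀ z ∈ S, ((f + f * f) z).im = 0 := fun z hz => by
    simp [Complex.mul_im, hreal z hz]
  have hgsq := eq_on_sq_of_im_eq_zero hmul hsmul hanti hg hgreal x hx y hy
  simp only [coe_add, coe_mul, Pi.add_apply, Pi.mul_apply] at hgsq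
  refine eq_of_sq_eq_of_pow_three_eq hsq ?_
  linear_combination (hgsq - hsq - (f x ^ 2 + f y ^ 2) * hsq) / 2
end

section
/- Let Ω be a compact topological space, X a Hausdorff locally convex space with seminorm p, and X₀ a convex subset of X. Then for every continuous f : Ω → X, sup over t ∈ Ω of dist_p(f(t), X₀) equals inf over g ∈ C(Ω, X₀) of sup over t ∈ Ω of p(f(t) - g(t)), where C(Ω, X₀) denotes continuous functions Ω → X with values in X₀ and dist_p(y, X₀) = inf{p(y - x) : x ∈ X₀}. -/
/-!
Let `r` exceed the supremum of the pointwise distances. Each `t` has some `x ∈ X₀` with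
`p (f t - x) < r`, and the continuous functions `r - p (f · - x)` are positive near `t`; by
compactness finitely many of them cover `Ω`, and their normalised positive parts form a partition
of unity. The corresponding convex combination `g` of the points `x` is continuous, takes values
in `X₀`, and stays in the convex `p`-ball of radius `r` around `f`, because each `x` only enters
where it lies in that ball. The reverse inequality holds pointwise.
-/

open Set

/- `Ω` need not be normal, so the partition of unity is made from the given functions instead of
Urysohn's lemma. -/
theorem exists_partitionOfUnity_finset_of_forall_exists_pos {Ω ι : Type*} [TopologicalSpace Ω]
    [CompactSpace Ω] {φ : ι → Ω → ℝ} (hφ : ∀ i, Continuous (φ i))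
    (hcover : ∀ w, ∃ i, 0 < φ i w) :
    ∃ (I : Finset ι) (ρ : PartitionOfUnity I Ω), ∀ i w, ρ i w ≠ 0 → 0 < φ i w := by
  obtain ⟨I, hI⟩ := isCompact_univ.elim_finite_subcover (fun i => {w | 0 < φ i w})
    (fun i => isOpen_lt continuous_const (hφ i)) fun w _ => mem_iUnion.2 (hcover w)
  set ψ : I → Ω → ℝ := fun i w => max (φ i w) 0
  have hψ : ∀ i, Continuous (ψ i) := fun i => (hφ i).max continuous_const
  have hsum_pos : ∀ w, 0 < ∑ i, ψ i w := by
    intro w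
    obtain ⟨i, hi, hw⟩ := mem_iUnion₂.1 (hI (mem_univ w))
    exact Finset.sum_pos' (fun j _ => le_max_right _ _)
      ⟨⟨i, hi⟩, Finset.mem_univ _, lt_max_of_lt_left hw⟩
  have hsum_one : ∀ w, ∑ᶠ i, ψ i w / ∑ j, ψ j w = 1 := fun w => by
    rw [finsum_eq_sum_of_fintype, ← Finset.sum_div, div_self (hsum_pos w).ne']
  refine ⟨I,
    { toFun := fun i => ⟨fun w => ψ i w / ∑ j, ψ j w,
        (hψ i).div (continuous_finsetSum _ fun j _ => hψ j) fun w => (hsum_pos w).ne'⟩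
      locallyFinite' := locallyFinite_of_finite _
      nonneg' := fun i w => div_nonneg (le_max_right _ _) (hsum_pos w).le
      sum_eq_one' := fun w _ => hsum_one w
      sum_le_one' := fun w => (hsum_one w).le }, fun i w hi => ?_⟩
  have hψi : ψ i w ≠ 0 := (div_ne_zero_iff.1 hi).1
  exact lt_of_not_ge fun h => hψi (max_eq_right h)

theorem exists_continuous_forall_mem_convex_of_forall_exists_pos {Ω E ι : Type*}
    [TopologicalSpace Ω] [CompactSpace Ω] [AddCommGroup E] [Module ℝ E] [TopologicalSpace E]
    [ContinuousAdd E] [ContinuousSMul ℝ E] {t : Ω → Set E} (ht : ∀ w, Convex ℝ (t w))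
    (c : ι → E) {φ : ι → Ω → ℝ} (hφ : ∀ i, Continuous (φ i)) (hcover : ∀ w, ∃ i, 0 < φ i w)
    (hc : ∀ i w, 0 < φ i w → c i ∈ t w) : ∃ g : C(Ω, E), ∀ w, g w ∈ t w := by
  obtain ⟨I, ρ, hρ⟩ := exists_partitionOfUnity_finset_of_forall_exists_pos hφ hcover
  exact ⟨⟨fun w => ∑ᶠ i, ρ i w • c i, ρ.continuous_finsum_smul fun _ _ _ => continuousAt_const⟩,
    fun w => ρ.finsum_smul_mem_convex (g := fun i _ => c i) (mem_univ w)
      (fun i hi => hc _ _ (hρ i w hi)) (ht w)⟩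

namespace Seminorm

variable {X : Type*} [AddCommGroup X] [Module ℝ X] (p : Seminorm ℝ X)

theorem bddBelow_range_apply {ι : Type*} (v : ι → X) : BddBelow (range fun i => p (v i)) :=
  ⟨0, forall_mem_range.2 fun _ => apply_nonneg p _⟩

variable {Ω : Type*} [TopologicalSpace Ω] [CompactSpace Ω] [TopologicalSpace X]
  [IsTopologicalAddGroup X] (f : C(Ω, X)) {X₀ : Set X}

theorem iSup_iInf_le_iSup_of_forall_mem (hp : Continuous p) {g : C(Ω, X)} (hg : ∀ t, g t ∈ X₀) :
    ⨆ t, ⨅ x : X₀, p (f t - x) ≤ ⨆ t, p (f t - g t) :=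
  ciSup_mono (isCompact_range (hp.comp (f.continuous.sub g.continuous))).bddAbove fun t =>
    ciInf_le (p.bddBelow_range_apply fun x : X₀ => f t - x) ⟨g t, hg t⟩

variable [ContinuousSMul ℝ X]

theorem exists_continuous_forall_mem_lt (hp : Continuous p) (hX₀ : Convex ℝ X₀) {r : ℝ}
    (h : ∀ t, ∃ x ∈ X₀, p (f t - x) < r) :
    ∃ g : C(Ω, X), ∀ t, g t ∈ X₀ ∧ p (f t - g t) < r := by
  have hball : ∀ t x, x ∈ p.ball (f t) r ↔ p (f t - x) < r := fun t x => by
    rw [p.mem_ball, map_sub_rev]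
  obtain ⟨g, hg⟩ := exists_continuous_forall_mem_convex_of_forall_exists_pos
    (t := fun t => X₀ ∩ p.ball (f t) r) (fun t => hX₀.inter (p.convex_ball _ _))
    (fun x : X₀ => (x : X)) (φ := fun x t => r - p (f t - x))
    (fun x => continuous_const.sub (hp.comp (f.continuous.sub continuous_const)))
    (fun t => let ⟨x, hx, hxt⟩ := h t; ⟨⟨x, hx⟩, sub_pos.2 hxt⟩)
    (fun x t hxt => ⟨x.2, (hball t x).2 (sub_pos.1 hxt)⟩)
  exact ⟨g, fun t => ⟨(hg t).1, (hball t (g t)).1 (hg t).2⟩⟩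

theorem exists_continuous_iSup_le_iSup_iInf_add (hp : Continuous p) (hX₀ : Convex ℝ X₀)
    (hne : X₀.Nonempty) {ε : ℝ} (hε : 0 < ε) :
    ∃ g : C(Ω, X), (∀ t, g t ∈ X₀) ∧
      ⨆ t, p (f t - g t) ≤ (⨆ t, ⨅ x : X₀, p (f t - x)) + ε := by
  obtain ⟨x₀, hx₀⟩ := hne
  have : Nonempty X₀ := ⟨⟨x₀, hx₀⟩⟩
  set M := ⨆ t, ⨅ x : X₀, p (f t - x)
  have hM : 0 ≤ M := Real.iSup_nonneg fun t => Real.iInf_nonneg fun _ => apply_nonneg p _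
  have hdist_le : ∀ t, ⨅ x : X₀, p (f t - x) ≤ M := by
    obtain ⟨C, hC⟩ := (isCompact_range (hp.comp (f.continuous.sub continuous_const))).bddAbove
    exact le_ciSup ⟨C, forall_mem_range.2 fun t =>
      (ciInf_le (p.bddBelow_range_apply fun x : X₀ => f t - x) ⟨x₀, hx₀⟩).trans
        (hC ⟨t, rfl⟩)⟩
  have hnear : ∀ t, ∃ x ∈ X₀, p (f t - x) < M + ε := fun t => by
    obtain ⟨x, hx⟩ := exists_lt_of_ciInf_lt ((hdist_le t).trans_lt (lt_add_of_pos_right M hε))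
    exact ⟨x, x.2, hx⟩
  obtain ⟨g, hg⟩ := p.exists_continuous_forall_mem_lt f hp hX₀ hnear
  exact ⟨g, fun t => (hg t).1, Real.iSup_le (fun t => (hg t).2.le) (add_nonneg hM hε.le)⟩

end Seminorm

theorem distance_formula_general {Ω X : Type*} [TopologicalSpace Ω] [CompactSpace Ω]
    [AddCommGroup X] [Module ℝ X] [TopologicalSpace X] [IsTopologicalAddGroup X]
    [ContinuousSMul ℝ X]
    (p : Seminorm ℝ X) (hp : Continuous p)
    (X₀ : Set X) (hX₀ : Convex ℝ X₀) (f : C(Ω, X)) :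
    (⨆ t : Ω, ⨅ x : X₀, p (f t - x)) =
      ⨅ g : {g : C(Ω, X) // ∀ t, g t ∈ X₀}, ⨆ t : Ω, p (f t - g.1 t) := by
  rcases X₀.eq_empty_or_nonempty with rfl | hne
  -- both sides are the junk value `0`: an `∅`-valued `g` exists only when `Ω` is empty
  · have hsup_zero : ∀ g : {g : C(Ω, X) // ∀ t, g t ∈ (∅ : Set X)}, ⨆ t, p (f t - g.1 t) = 0 :=
      fun g => @Real.iSup_of_isEmpty _ ⟨fun t => g.2 t⟩ _
    simp [hsup_zero]
  obtain ⟨x₀, hx₀⟩ := hne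
  have : Nonempty {g : C(Ω, X) // ∀ t, g t ∈ X₀} := ⟨⟨.const Ω x₀, fun _ => hx₀⟩⟩
  have herr_bdd : BddBelow (range fun g : {g : C(Ω, X) // ∀ t, g t ∈ X₀} =>
      ⨆ t, p (f t - g.1 t)) :=
    ⟨0, forall_mem_range.2 fun _ => Real.iSup_nonneg fun _ => apply_nonneg p _⟩
  refine le_antisymm (le_ciInf fun g => p.iSup_iInf_le_iSup_of_forall_mem f hp g.2)
    (le_of_forall_pos_le_add fun ε hε => ?_)
  obtain ⟨g, hgX₀, hg⟩ := p.exists_continuous_iSup_le_iSup_iInf_add f hp hX₀ ⟨x₀, hx₀⟩ hε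
  exact (ciInf_le herr_bdd ⟨g, hgX₀⟩).trans hg

/-- Burlando's distance formula, compact case: for convex `X₀` and a continuous
seminorm `p`, the uniform distance from `f` to continuous `X₀`-valued functions
equals the supremum of pointwise distances to `X₀`. -/
theorem distance_formula {Ω X : Type*} [TopologicalSpace Ω] [CompactSpace Ω]
    [AddCommGroup X] [Module ℝ X] [TopologicalSpace X] [IsTopologicalAddGroup X]
    [ContinuousSMul ℝ X] [LocallyConvexSpace ℝ X] [T2Space X]
    (p : Seminorm ℝ X) (hp : Continuous p)
    (X₀ : Set X) (hX₀ : Convex ℝ X₀) (f : C(Ω, X)) :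
    (⨆ t : Ω, ⨅ x : X₀, p (f t - x)) =
      ⨅ g : {g : C(Ω, X) // ∀ t, g t ∈ X₀}, ⨆ t : Ω, p (f t - g.1 t) :=
  distance_formula_general p hp X₀ hX₀ f
end

section
/- Let a ≤ t₀, ..., tₙ ≤ b be distinct reals and X a Banach space. The set of restrictions to [a,b] of X-valued polynomial functions f (finite sums of terms z^k·x with x ∈ X) satisfying f^(j)(t_i) = 0 for all 0 ≤ i ≤ n and 1 ≤ j ≤ m is dense in C([a,b], X) in the uniform topology. -/
/-!
Approximate `f` uniformly by `P = ∑ pᵢ • xᵢ` with real polynomials `pᵢ` (a partition of unity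
followed by the scalar Weierstrass theorem), then replace `P` by `P ∘ g`, where `g` is a real
polynomial mapping `[a,b]` into itself, uniformly close to the identity, with `(X - tᵢ)ᵐ ∣ g'`.
As `(P ∘ g)' = (P' ∘ g) g'`, the derivatives of orders `1,…,m` of `P ∘ g` vanish at every `tᵢ`.
Such a `g` is an antiderivative of `h = ∏ᵢ (1 - (1 - c (X - tᵢ)²)ᴺ)ᵐ`: on `[a,b]` it takes values
in `[0,1]` and tends to `1` away from the `tᵢ` as `N → ∞`, so `∫ (1 - h)` is small by dominated
convergence.
-/

open Set Filter Topology Polynomial MeasureTheory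

theorem Polynomial.derivative_surjective {K : Type*} [Field K] [CharZero K] :
    Function.Surjective (derivative : K[X] → K[X]) := by
  intro p
  induction p using Polynomial.induction_on' with
  | add p q hp hq =>
    obtain ⟨P, rfl⟩ := hp
    obtain ⟨Q, rfl⟩ := hq
    exact ⟨P + Q, derivative_add⟩
  | monomial n a =>
    refine ⟨monomial (n + 1) (a / (n + 1)), ?_⟩
    rw [derivative_monomial, Nat.add_sub_cancel]
    congr 1
    push_cast
    field_simp

theorem Polynomial.eval_iterate_derivative_eq_zero_of_pow_dvd_derivative {R : Type*} [CommRing R]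
    {q : R[X]} {τ : R} {m j : ℕ} (hq : (X - C τ) ^ m ∣ derivative q) (hj : j ≠ 0) (hjm : j ≤ m) :
    (derivative^[j] q).eval τ = 0 := by
  obtain ⟨j, rfl⟩ := Nat.exists_eq_succ_of_ne_zero hj
  rw [Function.iterate_succ_apply]
  exact dvd_iff_isRoot.mp <|
    (dvd_pow_self _ (by omega)).trans (pow_sub_dvd_iterate_derivative_of_pow_dvd j hq)

theorem Polynomial.exists_sum_pow_smul_eq_sum_eval_smul {R M : Type*} [CommSemiring R]
    [AddCommMonoid M] [Module R M] {ι : Type*} (S : Finset ι) (p : ι → R[X]) (x : ι → M) :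
    ∃ (N : ℕ) (c : ℕ → M),
      (fun s => ∑ k ∈ Finset.range N, s ^ k • c k) = fun s => ∑ l ∈ S, (p l).eval s • x l := by
  refine ⟨S.sup (natDegree ∘ p) + 1, fun k => ∑ l ∈ S, (p l).coeff k • x l, ?_⟩
  funext s
  simp only [Finset.smul_sum, smul_smul]
  rw [Finset.sum_comm]
  refine Finset.sum_congr rfl fun l hl => ?_
  rw [eval_eq_sum_range' (Nat.lt_succ_of_le (Finset.le_sup (f := natDegree ∘ p) hl)),
    Finset.sum_smul]
  simp only [mul_comm]

section

variable {𝕜 E ι : Type*} [NontriviallyNormedField 𝕜] [NormedAddCommGroup E] [NormedSpace 𝕜 E]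

theorem Polynomial.deriv_sum_eval_smul (S : Finset ι) (p : ι → 𝕜[X]) (x : ι → E) :
    deriv (fun s => ∑ l ∈ S, (p l).eval s • x l) =
      fun s => ∑ l ∈ S, (derivative (p l)).eval s • x l := by
  funext s
  rw [deriv_fun_sum fun l _ => (p l).differentiableAt.smul_const (x l)]
  simp only [deriv_smul_const (p _).differentiableAt, Polynomial.deriv]

theorem Polynomial.iteratedDeriv_sum_eval_smul (j : ℕ) (S : Finset ι) (p : ι → 𝕜[X])
    (x : ι → E) :
    iteratedDeriv j (fun s => ∑ l ∈ S, (p l).eval s • x l) =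
      fun s => ∑ l ∈ S, (derivative^[j] (p l)).eval s • x l := by
  induction j generalizing p with
  | zero => simp
  | succ j ih =>
    rw [iteratedDeriv_succ', deriv_sum_eval_smul, ih]
    simp only [Function.iterate_succ_apply]

end

theorem exists_sum_smul_near_of_continuousOn {E X : Type*} [TopologicalSpace E] [T2Space E]
    [LocallyCompactSpace E] [SeminormedAddCommGroup X] [NormedSpace ℝ X] {K : Set E}
    (hK : IsCompact K) {f : E → X} (hf : ContinuousOn f K) {ε : ℝ} (hε : 0 < ε) :
    ∃ (S : Finset E) (φ : S → C(E, ℝ)), ∀ y ∈ K, ‖f y - ∑ z, φ z y • f z‖ ≤ ε := by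
  have hU : ∀ z ∈ K, ∃ U, IsOpen U ∧ z ∈ U ∧ U ∩ K ⊆ f ⁻¹' Metric.ball (f z) ε := fun z hz =>
    mem_nhdsWithin.mp (hf z hz (Metric.ball_mem_nhds _ hε))
  choose! U hUo hzU hUf using hU
  obtain ⟨S, hSK, hKS⟩ := hK.elim_nhds_subcover U fun z hz => (hUo z hz).mem_nhds (hzU z hz)
  obtain ⟨ρ, hρU, -⟩ := PartitionOfUnity.exists_isSubordinate_of_locallyFinite_t2space hK
    (fun z : S => U z) (fun z => hUo z (hSK z z.2)) (locallyFinite_of_finite _) fun y hy => by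
      obtain ⟨z, hz, hyz⟩ := mem_iUnion₂.mp (hKS hy)
      exact mem_iUnion.mpr ⟨⟨z, hz⟩, hyz⟩
  refine ⟨S, fun z => ρ z, fun y hy => ?_⟩
  have hnear : ∀ z : S, ρ z y ≠ 0 → f z ∈ Metric.closedBall (f y) ε := fun z hz =>
    Metric.mem_closedBall_comm.mp <|
      Metric.ball_subset_closedBall (hUf z (hSK z z.2) ⟨hρU z (subset_tsupport _ hz), hy⟩)
  have := ρ.finsum_smul_mem_convex (g := fun z _ => f z) hy hnear (convex_closedBall (f y) ε)
  rwa [finsum_eq_sum_of_fintype, Metric.mem_closedBall, dist_eq_norm'] at this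

theorem exists_sum_eval_smul_near_of_continuousOn {X : Type*} [SeminormedAddCommGroup X]
    [NormedSpace ℝ X] {a b : ℝ} {f : ℝ → X} (hf : ContinuousOn f (Icc a b)) {ε : ℝ}
    (hε : 0 < ε) :
    ∃ (S : Finset ℝ) (p : S → ℝ[X]), ∀ s ∈ Icc a b, ‖f s - ∑ z, (p z).eval s • f z‖ ≤ ε := by
  obtain ⟨S, φ, hφ⟩ := exists_sum_smul_near_of_continuousOn isCompact_Icc hf (half_pos hε)
  set C := ∑ z : S, ‖f z‖ + 1
  have hC : 0 < C := by positivity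
  choose p hp using fun z => exists_polynomial_near_of_continuousOn a b (φ z)
    (φ z).continuous.continuousOn (ε / 2 / C) (by positivity)
  refine ⟨S, p, fun s hs => ?_⟩
  have herr : ‖∑ z, (φ z s - (p z).eval s) • f z‖ ≤ ε / 2 := calc
    _ ≤ ∑ z : S, ε / 2 / C * ‖f z‖ := norm_sum_le_of_le _ fun z _ => by
          rw [norm_smul, Real.norm_eq_abs, abs_sub_comm]
          exact mul_le_mul_of_nonneg_right (hp z s hs).le (norm_nonneg _)
    _ ≤ ε / 2 / C * C := by rw [← Finset.mul_sum]; gcongr; linarith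
    _ = ε / 2 := div_mul_cancel₀ _ hC.ne'
  calc ‖f s - ∑ z, (p z).eval s • f z‖
      = ‖(f s - ∑ z, φ z s • f z) + ∑ z, (φ z s - (p z).eval s) • f z‖ := by
        simp only [sub_smul, Finset.sum_sub_distrib]; abel_nf
    _ ≤ ε / 2 + ε / 2 := (norm_add_le _ _).trans (add_le_add (hφ s hs) herr)
    _ = ε := add_halves ε

theorem prod_one_sub_one_sub_pow_pow_mem_Icc {ι : Type*} (S : Finset ι) {v : ι → ℝ}
    (hv : ∀ i ∈ S, v i ∈ Icc 0 1) (N m : ℕ) :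
    ∏ i ∈ S, (1 - (1 - v i) ^ N) ^ m ∈ Icc (0 : ℝ) 1 := by
  have pow_mem : ∀ {x : ℝ}, x ∈ Icc (0 : ℝ) 1 → ∀ n : ℕ, x ^ n ∈ Icc (0 : ℝ) 1 :=
    fun hx n => ⟨pow_nonneg hx.1 n, pow_le_one₀ hx.1 hx.2⟩
  have hfac : ∀ i ∈ S, (1 - (1 - v i) ^ N) ^ m ∈ Icc (0 : ℝ) 1 := fun i hi =>
    pow_mem (Icc.one_sub_mem (pow_mem (Icc.one_sub_mem (hv i hi)) N)) m
  exact ⟨Finset.prod_nonneg fun i hi => (hfac i hi).1,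
    Finset.prod_le_one (fun i hi => (hfac i hi).1) fun i hi => (hfac i hi).2⟩

theorem tendsto_integral_one_sub_prod_one_sub_pow {ι : Type*} [Fintype ι] {a b : ℝ}
    (hab : a ≤ b) {w : ι → ℝ → ℝ} (hw : ∀ i, Continuous (w i))
    (hw01 : ∀ i, ∀ u ∈ Icc a b, w i u ∈ Icc 0 1) (hpos : ∀ᵐ u, ∀ i, 0 < w i u) (m : ℕ) :
    Tendsto (fun N : ℕ => ∫ u in a..b, (1 - ∏ i, (1 - (1 - w i u) ^ N) ^ m)) atTop (𝓝 0) := by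
  have hIcc : ∀ u ∈ uIoc a b, u ∈ Icc a b := fun u hu => Ioc_subset_Icc_self (uIoc_of_le hab ▸ hu)
  rw [← intervalIntegral.integral_zero]
  refine intervalIntegral.tendsto_integral_filter_of_dominated_convergence (fun _ => 1)
    (Eventually.of_forall fun N => (by fun_prop : Continuous _).aestronglyMeasurable)
    (Eventually.of_forall fun N => ae_of_all _ fun u hu => ?_) intervalIntegrable_const
    (hpos.mono fun u hu hu' => ?_)
  · have hprod := prod_one_sub_one_sub_pow_pow_mem_Icc Finset.univ
      (fun i _ => hw01 i u (hIcc u hu)) N m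
    rw [Real.norm_eq_abs, abs_le]
    constructor <;> linarith [hprod.1, hprod.2]
  · have hlim : Tendsto (fun N : ℕ => ∏ i, (1 - (1 - w i u) ^ N) ^ m) atTop
        (𝓝 (∏ _i : ι, (1 - 0) ^ m)) :=
      tendsto_finsetProd _ fun i _ => ((tendsto_pow_atTop_nhds_zero_of_lt_one
        (sub_nonneg.mpr (hw01 i u (hIcc u hu')).2) (by linarith [hu i])).const_sub 1).pow m
    simpa using hlim.const_sub 1

theorem exists_antiderivative_near_id_of_integral_lt {a b η : ℝ} {h : ℝ[X]}
    (h01 : ∀ u ∈ Icc a b, h.eval u ∈ Icc 0 1) (hint : ∫ u in a..b, (1 - h.eval u) < η) :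
    ∃ g : ℝ[X], derivative g = h ∧ ∀ s ∈ Icc a b, g.eval s ∈ Icc a s ∧ dist (g.eval s) s < η := by
  obtain ⟨G, hG⟩ := derivative_surjective h
  refine ⟨G + C (a - G.eval a), by simp [hG], fun s hs => ?_⟩
  set g := G + C (a - G.eval a)
  have hcont : Continuous fun u => 1 - h.eval u := by fun_prop
  have hsub : ∀ u ∈ Icc a s, u ∈ Icc a b := fun u hu => ⟨hu.1, hu.2.trans hs.2⟩
  have hD : ∫ u in a..s, (1 - h.eval u) = s - g.eval s := by
    have hderiv : ∀ u, HasDerivAt (fun u => u - g.eval u) (1 - h.eval u) u := fun u => by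
      simpa [g, hG] using (hasDerivAt_id' u).fun_sub (g.hasDerivAt u)
    rw [intervalIntegral.integral_eq_sub_of_hasDerivAt (fun u _ => hderiv u)
      (hcont.intervalIntegrable _ _)]
    simp [g]
  have hD0 : 0 ≤ ∫ u in a..s, (1 - h.eval u) :=
    intervalIntegral.integral_nonneg hs.1 fun u hu => sub_nonneg.mpr (h01 u (hsub u hu)).2
  have hDs : ∫ u in a..s, (1 - h.eval u) ≤ s - a := calc
    _ ≤ ∫ _ in a..s, (1 : ℝ) := intervalIntegral.integral_mono_on hs.1
          (hcont.intervalIntegrable _ _) intervalIntegrable_const fun u hu => by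
            linarith [(h01 u (hsub u hu)).1]
    _ = s - a := by simp
  have hDb : ∫ u in a..s, (1 - h.eval u) ≤ ∫ u in a..b, (1 - h.eval u) :=
    intervalIntegral.integral_mono_interval le_rfl hs.1 hs.2
      ((ae_restrict_iff' measurableSet_Ioc).mpr (ae_of_all _ fun u hu =>
        sub_nonneg.mpr (h01 u (Ioc_subset_Icc_self hu)).2))
      (hcont.intervalIntegrable _ _)
  refine ⟨⟨by linarith, by linarith⟩, ?_⟩
  rw [Real.dist_eq, abs_sub_comm, abs_of_nonneg (by linarith)]
  linarith

theorem exists_polynomial_pow_dvd_derivative_near_id {ι : Type*} [Fintype ι] {a b : ℝ}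
    (hab : a ≤ b) {t : ι → ℝ} (ht : ∀ i, t i ∈ Icc a b) (m : ℕ) {η : ℝ} (hη : 0 < η) :
    ∃ g : ℝ[X], (∀ i, (X - C (t i)) ^ m ∣ derivative g) ∧
      ∀ s ∈ Icc a b, g.eval s ∈ Icc a b ∧ dist (g.eval s) s < η := by
  set c := ((b - a) ^ 2 + 1)⁻¹
  have hw01 : ∀ i, ∀ u ∈ Icc a b, c * (u - t i) ^ 2 ∈ Icc 0 1 := fun i u hu => by
    refine ⟨by positivity, ?_⟩
    rw [inv_mul_le_iff₀ (by positivity)]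
    nlinarith [hu.1, hu.2, (ht i).1, (ht i).2]
  have hpos : ∀ᵐ u, ∀ i, 0 < c * (u - t i) ^ 2 :=
    ((finite_range t).countable.ae_notMem volume).mono fun u hu i => by
      have : u - t i ≠ 0 := sub_ne_zero.mpr fun h => hu ⟨i, h.symm⟩
      positivity
  obtain ⟨N, hN⟩ := ((tendsto_integral_one_sub_prod_one_sub_pow hab (fun i => by fun_prop)
    hw01 hpos m).eventually (gt_mem_nhds hη)).exists
  set h : ℝ[X] := ∏ i, (1 - (1 - C c * (X - C (t i)) ^ 2) ^ N) ^ m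
  have heval : ∀ u, h.eval u = ∏ i, (1 - (1 - c * (u - t i) ^ 2) ^ N) ^ m := by
    simp [h, eval_prod]
  obtain ⟨g, hgh, hg⟩ := exists_antiderivative_near_id_of_integral_lt (h := h)
    (fun u hu => heval u ▸ prod_one_sub_one_sub_pow_pow_mem_Icc _ (fun i _ => hw01 i u hu) N m)
    (by simpa only [heval] using hN)
  refine ⟨g, fun i => ?_, fun s hs => ⟨Icc_subset_Icc_right hs.2 (hg s hs).1, (hg s hs).2⟩⟩
  rw [hgh]
  refine (pow_dvd_pow_of_dvd ?_ m).trans (Finset.dvd_prod_of_mem _ (Finset.mem_univ i))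
  exact dvd_iff_isRoot.mpr (by simp)

theorem dense_poly_vanishing_derivs_general (X : Type*) [NormedAddCommGroup X]
    [NormedSpace ℝ X]
    (a b : ℝ) (n m : ℕ) (t : Fin (n + 1) → ℝ)
    (htmem : ∀ i, t i ∈ Set.Icc a b)
    (f : ℝ → X) (hf : ContinuousOn f (Set.Icc a b)) (ε : ℝ) (hε : 0 < ε) :
    ∃ (N : ℕ) (c : ℕ → X),
      (∀ (i : Fin (n + 1)) (j : ℕ), 1 ≤ j → j ≤ m →
        iteratedDeriv j (fun s : ℝ => ∑ k ∈ Finset.range N, s ^ k • c k) (t i) = 0) ∧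
      ∀ s ∈ Set.Icc a b, ‖f s - ∑ k ∈ Finset.range N, s ^ k • c k‖ ≤ ε := by
  obtain ⟨S, p, hp⟩ := exists_sum_eval_smul_near_of_continuousOn hf (half_pos hε)
  set P : ℝ → X := fun s => ∑ z, (p z).eval s • f z
  obtain ⟨δ, hδ, hPδ⟩ := Metric.uniformContinuousOn_iff.mp
    (isCompact_Icc.uniformContinuousOn_of_continuous (by fun_prop : Continuous P).continuousOn)
    (ε / 2) (half_pos hε)
  obtain ⟨g, hgdvd, hg⟩ := exists_polynomial_pow_dvd_derivative_near_id
    ((htmem 0).1.trans (htmem 0).2) htmem m hδ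
  obtain ⟨N, c, hNc⟩ := exists_sum_pow_smul_eq_sum_eval_smul Finset.univ
    (fun z => (p z).comp g) (fun z : S => f z)
  refine ⟨N, c, fun i j hj hjm => ?_, fun s hs => ?_⟩
  · rw [hNc, iteratedDeriv_sum_eval_smul]
    refine Finset.sum_eq_zero fun z _ => ?_
    rw [eval_iterate_derivative_eq_zero_of_pow_dvd_derivative ?_ (by omega) hjm, zero_smul]
    rw [derivative_comp]
    exact dvd_mul_of_dvd_left (hgdvd i) _
  · rw [congrFun hNc s]
    simp only [eval_comp]
    calc ‖f s - P (g.eval s)‖ ≤ ‖f s - P s‖ + ‖P s - P (g.eval s)‖ :=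
          norm_sub_le_norm_sub_add_norm_sub _ _ _
      _ ≤ ε / 2 + ε / 2 := by
          refine add_le_add (hp s hs) ?_
          rw [← dist_eq_norm, dist_comm]
          exact (hPδ _ (hg s hs).1 _ hs (hg s hs).2).le
      _ = ε := add_halves ε

/-- `X`-valued polynomials whose derivatives of orders `1,…,m` vanish at the distinct
points `t₀,…,tₙ` of `[a,b]` are uniformly dense in `C([a,b], X)`. -/
theorem dense_poly_vanishing_derivs (X : Type*) [NormedAddCommGroup X]
    [NormedSpace ℝ X] [CompleteSpace X]
    (a b : ℝ) (n m : ℕ) (t : Fin (n + 1) → ℝ) (ht : Function.Injective t)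
    (htmem : ∀ i, t i ∈ Set.Icc a b)
    (f : ℝ → X) (hf : ContinuousOn f (Set.Icc a b)) (ε : ℝ) (hε : 0 < ε) :
    ∃ (N : ℕ) (c : ℕ → X),
      (∀ (i : Fin (n + 1)) (j : ℕ), 1 ≤ j → j ≤ m →
        iteratedDeriv j (fun s : ℝ => ∑ k ∈ Finset.range N, s ^ k • c k) (t i) = 0) ∧
      ∀ s ∈ Set.Icc a b, ‖f s - ∑ k ∈ Finset.range N, s ^ k • c k‖ ≤ ε :=
  dense_poly_vanishing_derivs_general X a b n m t htmem f hf ε hε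
end

section
/- Let a ≤ t₀, ..., tₙ ≤ b be distinct reals and X a Banach space. The set of restrictions to [a,b] of X-valued polynomials f with f(t_i) = 0 for all i is uniformly dense in {f ∈ C([a,b], X) : f(t_i) = 0 for all i}. -/
/-!
A partition of unity subordinate to a finite cover by `ε`-balls approximates a continuous
`X`-valued map by a finite sum `∑ ρᵢ(s) • vᵢ`; approximating each `ρᵢ` by a real polynomial
(Weierstrass) shows that `X`-valued polynomials are dense in `C([a,b], X)`. Subtracting the
Lagrange interpolant at the nodes `tᵢ` is a continuous map that sends polynomials to polynomials,
makes every function vanish at the nodes and fixes those that already do; applying it to a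
sequence of polynomials converging to `f` yields polynomials vanishing at the nodes.
-/

open Polynomial Set

namespace PolynomialModule

variable {R M : Type*} [CommRing R] [AddCommGroup M] [Module R M]

theorem exists_eval_eq_sum_range (Q : PolynomialModule R M) :
    ∃ N, ∀ r : R, eval r Q = ∑ k ∈ Finset.range N, r ^ k • Q.coeff k := by
  refine ⟨Q.coeff.support.sup id + 1, fun r => ?_⟩
  rw [eval_apply, Finsupp.sum_of_support_subset _ _ _ fun _ _ => smul_zero _]
  intro k hk
  exact Finset.mem_range_succ_iff.mpr (Finset.le_sup (f := id) hk)

variable [TopologicalSpace R] [IsTopologicalRing R] [TopologicalSpace M] [ContinuousAdd M]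
  [ContinuousSMul R M]

theorem continuous_eval (Q : PolynomialModule R M) : Continuous fun r : R => eval r Q := by
  simp only [eval_apply, Finsupp.sum]
  fun_prop

variable (M) in
noncomputable def toContinuousMapOnₗ (s : Set R) : PolynomialModule R M →ₗ[R] C(s, M) where
  toFun Q := ⟨fun x => eval (x : R) Q, Q.continuous_eval.comp continuous_subtype_val⟩
  map_add' _ _ := by ext; simp
  map_smul' _ _ := by ext; simp

@[simp]
theorem toContinuousMapOnₗ_apply (s : Set R) (Q : PolynomialModule R M) (x : s) :
    toContinuousMapOnₗ M s Q x = eval (x : R) Q :=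
  rfl

end PolynomialModule

open PolynomialModule

theorem ContinuousMap.topologicalClosure_span_smul_const_eq_top {K E : Type*}
    [TopologicalSpace K] [CompactSpace K] [T2Space K] [SeminormedAddCommGroup E]
    [NormedSpace ℝ E] :
    (Submodule.span ℝ {g : C(K, E) | ∃ (φ : C(K, ℝ)) (v : E), φ • const K v = g}).topologicalClosure
      = ⊤ := by
  refine Submodule.dense_iff_topologicalClosure_eq_top.mp fun f => Metric.mem_closure_iff.mpr ?_
  intro ε hε
  obtain ⟨t, ht⟩ := isCompact_univ.elim_finite_subcover (fun y => f ⁻¹' Metric.ball (f y) (ε / 2))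
    (fun y => Metric.isOpen_ball.preimage f.continuous)
    fun y _ => mem_iUnion.mpr ⟨y, Metric.mem_ball_self (half_pos hε)⟩
  obtain ⟨ρ, hρ⟩ := PartitionOfUnity.exists_isSubordinate isClosed_univ
    (fun y : t => f ⁻¹' Metric.ball (f y) (ε / 2))
    (fun y => Metric.isOpen_ball.preimage f.continuous) fun x _ => by
      obtain ⟨y, hy, hxy⟩ := mem_iUnion₂.mp (ht (mem_univ x))
      exact mem_iUnion.mpr ⟨⟨y, hy⟩, hxy⟩
  refine ⟨∑ y : t, ρ y • const K (f y),
    Submodule.sum_mem _ fun y _ => Submodule.subset_span ⟨ρ y, f y, rfl⟩, ?_⟩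
  refine (ContinuousMap.dist_le (half_pos hε).le |>.mpr fun x => ?_).trans_lt (half_lt_self hε)
  have hx : ∑ᶠ y : t, ρ y x • f y ∈ Metric.closedBall (f x) (ε / 2) :=
    ρ.finsum_smul_mem_convex (g := fun y _ => f y) (mem_univ x)
      (fun y hy => (Metric.mem_ball'.mp (hρ y (subset_closure hy))).le) (convex_closedBall _ _)
  rw [finsum_eq_sum_of_fintype, Metric.mem_closedBall'] at hx
  simpa using hx

theorem subset_closure_inter_of_retraction {α : Type*} [TopologicalSpace α] {P V : Set α}
    {T : α → α} (hP : Dense P) (hT : Continuous T) (hTP : MapsTo T P P) (hTV : ∀ x, T x ∈ V)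
    (hVT : ∀ x ∈ V, T x = x) : V ⊆ closure (P ∩ V) := by
  intro x hx
  rw [← hVT x hx]
  have hTPV : T '' P ⊆ P ∩ V := by
    rintro _ ⟨y, hy, rfl⟩
    exact ⟨hTP hy, hTV y⟩
  exact closure_mono hTPV (hT.range_subset_closure_image_dense hP (mem_range_self x))

section

variable {X : Type*} [NormedAddCommGroup X] [NormedSpace ℝ X]

theorem dense_range_toContinuousMapOnₗ_Icc (a b : ℝ) :
    Dense (range (toContinuousMapOnₗ X (Icc a b))) := by
  have hpoly : Dense (polynomialFunctions (Icc a b) : Set C(Icc a b, ℝ)) := by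
    rw [dense_iff_closure_eq, ← Subalgebra.topologicalClosure_coe,
      polynomialFunctions_closure_eq_top]
    rfl
  have hgen : ∀ (φ : C(Icc a b, ℝ)) (v : X),
      φ • ContinuousMap.const (Icc a b) v ∈ closure (range (toContinuousMapOnₗ X (Icc a b))) := by
    intro φ v
    have hcont : Continuous fun φ : C(Icc a b, ℝ) => φ • ContinuousMap.const (Icc a b) v :=
      ContinuousMap.continuous_of_continuous_uncurry _ (by
        simp only [Function.uncurry_def, ContinuousMap.smul_apply', ContinuousMap.const_apply]
        fun_prop)
    refine closure_mono ?_ (hcont.range_subset_closure_image_dense hpoly ⟨φ, rfl⟩)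
    rintro _ ⟨_, ⟨p, -, rfl⟩, rfl⟩
    exact ⟨p • single ℝ 0 v, by ext; simp⟩
  rw [← LinearMap.coe_range]
  refine Submodule.dense_iff_topologicalClosure_eq_top.mpr (eq_top_iff.mpr ?_)
  rw [← ContinuousMap.topologicalClosure_span_smul_const_eq_top]
  refine Submodule.topologicalClosure_minimal _ (Submodule.span_le.mpr ?_) isClosed_closure
  rintro _ ⟨φ, v, rfl⟩
  exact hgen φ v

section Interpolation

variable {ι : Type*} [Fintype ι] [DecidableEq ι] {s : Set ℝ} (t : ι → s)

noncomputable def lagrangeRemainder (g : C(s, X)) : C(s, X) :=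
  g - ∑ i, (Lagrange.basis Finset.univ (fun i => (t i : ℝ)) i).toContinuousMapOn s •
    ContinuousMap.const s (g (t i))

theorem continuous_lagrangeRemainder : Continuous (lagrangeRemainder (X := X) t) := by
  refine continuous_id.sub (continuous_finsetSum _ fun i _ => ?_)
  set L := (Lagrange.basis Finset.univ (fun i => (t i : ℝ)) i).toContinuousMapOn s
  have hL : Continuous fun v : X => L • ContinuousMap.const s v :=
    ContinuousMap.continuous_of_continuous_uncurry _ (by
      simp only [Function.uncurry_def, ContinuousMap.smul_apply', ContinuousMap.const_apply]
      exact (L.continuous.comp continuous_snd).smul continuous_fst)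
  exact hL.comp (continuous_eval_const (t i))

theorem lagrangeRemainder_apply_node (ht : Function.Injective t) (g : C(s, X)) (j : ι) :
    lagrangeRemainder t g (t j) = 0 := by
  have hbasis (i : ι) : (Lagrange.basis Finset.univ (fun i => (t i : ℝ)) i).eval (t j : ℝ) =
      if i = j then 1 else 0 := by
    split_ifs with hij
    · subst hij
      exact Lagrange.eval_basis_self (fun _ _ _ _ h => ht (Subtype.val_injective h))
        (Finset.mem_univ i)
    · exact Lagrange.eval_basis_of_ne (v := fun i => (t i : ℝ)) hij (Finset.mem_univ j)
  simp [lagrangeRemainder, hbasis]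

theorem lagrangeRemainder_of_apply_nodes_eq_zero {g : C(s, X)} (hg : ∀ i, g (t i) = 0) :
    lagrangeRemainder t g = g := by
  simp [lagrangeRemainder, hg]

theorem lagrangeRemainder_mem_range {g : C(s, X)} (hg : g ∈ range (toContinuousMapOnₗ X s)) :
    lagrangeRemainder t g ∈ range (toContinuousMapOnₗ X s) := by
  obtain ⟨Q, rfl⟩ := hg
  refine ⟨Q - ∑ i, Lagrange.basis Finset.univ (fun i => (t i : ℝ)) i •
    single ℝ 0 (eval (t i : ℝ) Q), ?_⟩
  ext x
  simp [lagrangeRemainder]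

end Interpolation

end

theorem dense_poly_vanishing_points_general (X : Type*) [NormedAddCommGroup X]
    [NormedSpace ℝ X]
    (a b : ℝ) (n : ℕ) (t : Fin (n + 1) → ℝ) (ht : Function.Injective t)
    (htmem : ∀ i, t i ∈ Set.Icc a b)
    (f : ℝ → X) (hf : ContinuousOn f (Set.Icc a b)) (hf0 : ∀ i, f (t i) = 0)
    (ε : ℝ) (hε : 0 < ε) :
    ∃ (N : ℕ) (c : ℕ → X),
      (∀ i : Fin (n + 1), ∑ k ∈ Finset.range N, (t i) ^ k • c k = 0) ∧
      ∀ s ∈ Set.Icc a b, ‖f s - ∑ k ∈ Finset.range N, s ^ k • c k‖ ≤ ε := by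
  let τ : Fin (n + 1) → Icc a b := fun i => ⟨t i, htmem i⟩
  have hτ : Function.Injective τ := fun i j hij => ht (congrArg Subtype.val hij)
  let F : C(Icc a b, X) := ⟨(Icc a b).domRestrict f, hf.domRestrict⟩
  have hF : F ∈ closure (range (toContinuousMapOnₗ X (Icc a b)) ∩ {g | ∀ i, g (τ i) = 0}) :=
    subset_closure_inter_of_retraction (dense_range_toContinuousMapOnₗ_Icc a b)
      (continuous_lagrangeRemainder τ) (fun _ => lagrangeRemainder_mem_range τ)
      (lagrangeRemainder_apply_node τ hτ) (fun _ => lagrangeRemainder_of_apply_nodes_eq_zero τ)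
      hf0
  obtain ⟨_, ⟨⟨Q, rfl⟩, hQt⟩, hFQ⟩ := Metric.mem_closure_iff.mp hF ε hε
  obtain ⟨N, hN⟩ := Q.exists_eval_eq_sum_range
  refine ⟨N, Q.coeff, fun i => ?_, fun s hs => ?_⟩
  · rw [← hN]
    exact hQt i
  · rw [← hN, ← dist_eq_norm]
    exact (ContinuousMap.dist_apply_le_dist (⟨s, hs⟩ : Icc a b)).trans hFQ.le

/-- `X`-valued polynomials vanishing at the distinct points `t₀,…,tₙ` of `[a,b]` are
uniformly dense in the continuous functions vanishing there. -/
theorem dense_poly_vanishing_points (X : Type*) [NormedAddCommGroup X]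
    [NormedSpace ℝ X] [CompleteSpace X]
    (a b : ℝ) (n : ℕ) (t : Fin (n + 1) → ℝ) (ht : Function.Injective t)
    (htmem : ∀ i, t i ∈ Set.Icc a b)
    (f : ℝ → X) (hf : ContinuousOn f (Set.Icc a b)) (hf0 : ∀ i, f (t i) = 0)
    (ε : ℝ) (hε : 0 < ε) :
    ∃ (N : ℕ) (c : ℕ → X),
      (∀ i : Fin (n + 1), ∑ k ∈ Finset.range N, (t i) ^ k • c k = 0) ∧
      ∀ s ∈ Set.Icc a b, ‖f s - ∑ k ∈ Finset.range N, s ^ k • c k‖ ≤ ε :=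
  dense_poly_vanishing_points_general X a b n t ht htmem f hf hf0 ε hε
end

section
/- For every f ∈ C([0,1], ℂ) of class C^m, points t₁, ..., tₙ ∈ [0,1], and ε > 0, there exists a polynomial g ∈ ℂ[z] such that g^(j)(t_i) = f^(j)(t_i) for all 1 ≤ i ≤ n, 0 ≤ j ≤ m, and sup_{t ∈ [0,1]} |f(t) - g(t)| ≤ ε. -/
/-!
Approximate `f` in `C^m([0,1])` by a polynomial `P` (Weierstrass for `f⁽ᵐ⁾`, then integrate `m`
times, the constants chosen by matching values at the left endpoint). `P` then misses the
prescribed jets at the nodes only by a small amount, and `P` is corrected by the Hermite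
interpolant of these errors. Hermite interpolation is a linear map out of a finite-dimensional
space, hence continuous, so the correction is uniformly small on `[0,1]`.
-/

open Polynomial Finset Set

section Hermite

variable {K : Type*} [Field K]

noncomputable def hermiteJet (S : Finset K) (m : ℕ) : K[X] →ₗ[K] (S × Fin (m + 1) → K) where
  toFun p x := (derivative^[x.2] p).eval (x.1 : K)
  map_add' p q := by ext; simp [iterate_map_add]
  map_smul' c p := by ext; simp [iterate_derivative_smul]

variable [CharZero K]

theorem prod_X_sub_C_pow_dvd_of_hermiteJet_eq_zero {S : Finset K} {m : ℕ} {p : K[X]}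
    (hp : hermiteJet S m p = 0) : ∏ s ∈ S, (X - C s) ^ (m + 1) ∣ p := by
  refine Finset.prod_dvd_of_coprime
    (fun s _ s' _ h => (pairwise_coprime_X_sub_C Function.injective_id h).pow) fun s hs => ?_
  rcases eq_or_ne p 0 with rfl | hp0
  · exact dvd_zero _
  refine (le_rootMultiplicity_iff hp0).mp
    ((lt_rootMultiplicity_iff_isRoot_iterate_derivative hp0).mpr fun j hj => ?_)
  simpa [hermiteJet] using congrFun hp (⟨s, hs⟩, ⟨j, Nat.lt_succ_of_le hj⟩)

theorem hermiteJet_comp_degreeLT_injective (S : Finset K) (m : ℕ) :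
    Function.Injective (hermiteJet S m ∘ₗ (degreeLT K (#S * (m + 1))).subtype) := by
  rw [← LinearMap.ker_eq_bot, LinearMap.ker_eq_bot']
  rintro ⟨p, hpdeg⟩ hp
  have hmonic := monic_prod_of_monic S _ fun s _ => (monic_X_sub_C s).pow (m + 1)
  have hdeg : (∏ s ∈ S, (X - C s) ^ (m + 1)).degree = ((#S * (m + 1) : ℕ) : WithBot ℕ) := by
    rw [degree_eq_natDegree hmonic.ne_zero,
      natDegree_prod_of_monic _ _ fun s _ => (monic_X_sub_C s).pow _]
    simp
  ext1
  exact eq_zero_of_dvd_of_degree_lt (prod_X_sub_C_pow_dvd_of_hermiteJet_eq_zero hp)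
    (hdeg ▸ mem_degreeLT.mp hpdeg)

theorem hermiteJet_comp_degreeLT_bijective (S : Finset K) (m : ℕ) :
    Function.Bijective (hermiteJet S m ∘ₗ (degreeLT K (#S * (m + 1))).subtype) := by
  have h := hermiteJet_comp_degreeLT_injective S m
  refine ⟨h, (LinearMap.injective_iff_surjective_of_finrank_eq_finrank ?_).mp h⟩
  simp [(degreeLTEquiv K _).finrank_eq]

noncomputable def hermiteInterpolation (S : Finset K) (m : ℕ) :
    (S × Fin (m + 1) → K) ≃ₗ[K] degreeLT K (#S * (m + 1)) :=
  (LinearEquiv.ofBijective _ (hermiteJet_comp_degreeLT_bijective S m)).symm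

theorem hermiteJet_hermiteInterpolation (S : Finset K) (m : ℕ) (v : S × Fin (m + 1) → K) :
    hermiteJet S m (hermiteInterpolation S m v) = v :=
  (LinearEquiv.ofBijective _ (hermiteJet_comp_degreeLT_bijective S m)).apply_symm_apply v

theorem exists_derivative_eq (p : K[X]) : ∃ q, derivative q = p := by
  induction p using Polynomial.induction_on' with
  | add p q hp hq =>
    obtain ⟨a, rfl⟩ := hp
    obtain ⟨b, rfl⟩ := hq
    exact ⟨a + b, derivative_add⟩
  | monomial n a =>
    refine ⟨monomial (n + 1) (a / (n + 1)), ?_⟩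
    rw [derivative_monomial]
    congr 1
    push_cast
    field_simp

end Hermite

theorem LinearMap.exists_pos_forall_norm_eval_lt {𝕜 V : Type*} [NontriviallyNormedField 𝕜]
    [CompleteSpace 𝕜] [NormedAddCommGroup V] [NormedSpace 𝕜 V] [FiniteDimensional 𝕜 V]
    (L : V →ₗ[𝕜] 𝕜[X]) {Z : Set 𝕜} (hZ : IsCompact Z) {ε : ℝ} (hε : 0 < ε) :
    ∃ η > 0, ∀ v, ‖v‖ < η → ∀ z ∈ Z, ‖(L v).eval z‖ < ε := by
  have := isCompact_iff_compactSpace.mp hZ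
  have hcont := ((toContinuousMapOnAlgHom Z).toLinearMap ∘ₗ L).continuous_of_finiteDimensional
  obtain ⟨η, hη, h⟩ := Metric.continuousAt_iff.mp (hcont.continuousAt (x := 0)) ε hε
  refine ⟨η, hη, fun v hv z hz => ?_⟩
  have hv' := h (by rwa [dist_zero_right])
  rw [map_zero, dist_zero_right] at hv'
  exact (ContinuousMap.norm_coe_le_norm _ ⟨z, hz⟩).trans_lt hv'

theorem Complex.exists_polynomial_near_of_continuousOn (a b : ℝ) (f : ℝ → ℂ)
    (hf : ContinuousOn f (Icc a b)) (ε : ℝ) (hε : 0 < ε) :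
    ∃ p : ℂ[X], ∀ x ∈ Icc a b, ‖p.eval (x : ℂ) - f x‖ < ε := by
  obtain ⟨p, hp⟩ := _root_.exists_polynomial_near_of_continuousOn a b (fun x => (f x).re)
    (continuous_re.comp_continuousOn hf) (ε / 2) (half_pos hε)
  obtain ⟨q, hq⟩ := _root_.exists_polynomial_near_of_continuousOn a b (fun x => (f x).im)
    (continuous_im.comp_continuousOn hf) (ε / 2) (half_pos hε)
  refine ⟨p.map (algebraMap ℝ ℂ) + C I * q.map (algebraMap ℝ ℂ), fun x hx => ?_⟩
  have hmap (r : ℝ[X]) : (r.map (algebraMap ℝ ℂ)).eval (x : ℂ) = ((r.eval x : ℝ) : ℂ) := by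
    rw [eval_map_algebraMap, ← coe_algebraMap, aeval_algebraMap_apply_eq_algebraMap_eval]
  calc _ ≤ |p.eval x - (f x).re| + |q.eval x - (f x).im| := by
        convert norm_le_abs_re_add_abs_im _ using 3 <;> simp [hmap]
    _ < ε / 2 + ε / 2 := add_lt_add (hp x hx) (hq x hx)
    _ = ε := add_halves ε

theorem norm_sub_eval_le_of_norm_derivWithin_sub_le {a b x C : ℝ} {f : ℝ → ℂ} {P : ℂ[X]}
    (hf : DifferentiableOn ℝ f (Icc a b)) (hPa : P.eval (a : ℂ) = f a)
    (hC : ∀ y ∈ Icc a b, ‖derivWithin f (Icc a b) y - (derivative P).eval (y : ℂ)‖ ≤ C)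
    (hx : x ∈ Icc a b) : ‖f x - P.eval (x : ℂ)‖ ≤ C * (x - a) := by
  have hderiv : ∀ y ∈ Icc a b, HasDerivWithinAt (fun z : ℝ => f z - P.eval (z : ℂ))
      (derivWithin f (Icc a b) y - (derivative P).eval (y : ℂ)) (Icc a b) y := fun y hy =>
    (hf y hy).hasDerivWithinAt.sub (P.hasDerivAt (y : ℂ)).comp_ofReal.hasDerivWithinAt
  have ha : a ∈ Icc a b := left_mem_Icc.mpr (hx.1.trans hx.2)
  simpa [hPa, abs_of_nonneg (sub_nonneg.mpr hx.1)] using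
    (convex_Icc a b).norm_image_sub_le_of_norm_hasDerivWithin_le hderiv hC ha hx

theorem exists_polynomial_near_iteratedDerivWithin {a b : ℝ} (hab : a < b) {m : ℕ} {f : ℝ → ℂ}
    (hf : ContDiffOn ℝ m f (Icc a b)) {δ : ℝ} (hδ : 0 < δ) :
    ∃ P : ℂ[X], ∀ j ≤ m, ∀ x ∈ Icc a b,
      ‖iteratedDerivWithin j f (Icc a b) x - (derivative^[j] P).eval (x : ℂ)‖ ≤ δ := by
  induction m generalizing f δ with
  | zero =>
    obtain ⟨P, hP⟩ := Complex.exists_polynomial_near_of_continuousOn a b f hf.continuousOn δ hδ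
    refine ⟨P, fun j hj x hx => ?_⟩
    obtain rfl : j = 0 := Nat.le_zero.mp hj
    simpa [norm_sub_rev] using (hP x hx).le
  | succ m ih =>
    have hf' : ContDiffOn ℝ m (derivWithin f (Icc a b)) (Icc a b) :=
      hf.derivWithin (uniqueDiffOn_Icc hab) (by norm_cast)
    have hba : 1 ≤ b - a + 1 := by linarith
    obtain ⟨Q, hQ⟩ := ih hf' (div_pos hδ (by linarith) : 0 < δ / (b - a + 1))
    obtain ⟨R, hR⟩ := exists_derivative_eq Q
    set P := R + C (f a - R.eval (a : ℂ)) with hPdef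
    have hP : derivative P = Q := by simp [hPdef, hR]
    refine ⟨P, fun j hj x hx => ?_⟩
    cases j with
    | zero =>
      have hC : ∀ y ∈ Icc a b,
          ‖derivWithin f (Icc a b) y - (derivative P).eval (y : ℂ)‖ ≤ δ / (b - a + 1) := by
        simpa only [hP, iteratedDerivWithin_zero, Function.iterate_zero, id] using
          hQ 0 m.zero_le
      calc _ ≤ δ / (b - a + 1) * (x - a) := by
            simpa using norm_sub_eval_le_of_norm_derivWithin_sub_le
              (hf.differentiableOn (by simp)) (by simp [hPdef]) hC hx
        _ ≤ δ / (b - a + 1) * (b - a + 1) := by gcongr; linarith [hx.2]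
        _ = δ := div_mul_cancel₀ δ (by linarith)
    | succ j =>
      rw [iteratedDerivWithin_succ', Function.iterate_succ_apply, hP]
      exact (hQ j (Nat.succ_le_succ_iff.mp hj) x hx).trans (div_le_self hδ.le hba)

/-- Simultaneous uniform approximation and Hermite interpolation: a polynomial can
match `f` and its derivatives up to order `m` at finitely many points of `[0,1]`
while uniformly approximating `f`. -/
theorem approx_with_hermite_interpolation (n m : ℕ) (f : ℝ → ℂ)
    (hf : ContDiffOn ℝ m f (Set.Icc (0 : ℝ) 1))
    (t : Fin n → ℝ) (htmem : ∀ i, t i ∈ Set.Icc (0 : ℝ) 1)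
    (ε : ℝ) (hε : 0 < ε) :
    ∃ g : Polynomial ℂ,
      (∀ (i : Fin n) (j : ℕ), j ≤ m →
        (Polynomial.derivative^[j] g).eval ((t i : ℝ) : ℂ) =
          iteratedDerivWithin j f (Set.Icc (0 : ℝ) 1) (t i)) ∧
      ∀ s ∈ Set.Icc (0 : ℝ) 1, ‖f s - g.eval ((s : ℝ) : ℂ)‖ ≤ ε := by
  classical
  set S : Finset ℂ := univ.image fun i => (t i : ℂ)
  obtain ⟨η, hη, hsmall⟩ := ((degreeLT ℂ _).subtype ∘ₗ (hermiteInterpolation S m).toLinearMap)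
    |>.exists_pos_forall_norm_eval_lt (isCompact_Icc.image Complex.continuous_ofReal) (half_pos hε)
  obtain ⟨P, hP⟩ := exists_polynomial_near_iteratedDerivWithin zero_lt_one hf
    (half_pos (lt_min hη hε))
  -- the nodes are taken in `ℂ`; `.re` recovers the real node at which `f` is differentiated
  set err : S × Fin (m + 1) → ℂ := fun x =>
    iteratedDerivWithin x.2 f (Icc 0 1) x.1.1.re - (derivative^[x.2] P).eval x.1.1
  have herr : ‖err‖ < η := by
    refine (pi_norm_lt_iff hη).mpr fun ⟨⟨s, hs⟩, j⟩ => ?_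
    obtain ⟨i, -, rfl⟩ := mem_image.mp hs
    calc _ ≤ min η ε / 2 := by simpa [err] using hP j (Nat.lt_succ_iff.mp j.2) (t i) (htmem i)
      _ < η := by linarith [min_le_left η ε]
  set Q : ℂ[X] := (hermiteInterpolation S m err : ℂ[X])
  refine ⟨P + Q, fun i j hj => ?_, fun s hs => ?_⟩
  · have hti : (t i : ℂ) ∈ S := mem_image_of_mem _ (mem_univ i)
    have hQ : (derivative^[j] Q).eval (t i : ℂ) = err (⟨t i, hti⟩, ⟨j, Nat.lt_succ_of_le hj⟩) :=
      congrFun (hermiteJet_hermiteInterpolation S m err) (⟨t i, hti⟩, ⟨j, Nat.lt_succ_of_le hj⟩)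
    rw [iterate_map_add, eval_add, hQ]
    simp [err]
  · calc ‖f s - (P + Q).eval (s : ℂ)‖ ≤ ‖f s - P.eval (s : ℂ)‖ + ‖Q.eval (s : ℂ)‖ := by
          rw [eval_add, ← sub_sub]; exact norm_sub_le _ _
      _ ≤ ε / 2 + ε / 2 := by
          gcongr
          · simpa using (hP 0 m.zero_le s hs).trans (by linarith [min_le_right η ε])
          · exact (hsmall err herr _ (mem_image_of_mem _ hs)).le
      _ = ε := add_halves ε
end

section
/- Let Ω be a compact Hausdorff space, X a Banach space, T = {s₁, ..., s_k} ⊆ Ω a finite set, B ⊆ X any subset, and X₁ ⊆ X a convex subset; let S ⊆ Ω with closure disjoint from T. Define K = {g ∈ C(Ω, X) : g(s_i) ∈ B for all i, g(S) ⊆ X₁}. Then the uniform closure of K equals {g ∈ C(Ω, X) : g(s_i) ∈ closure(B) for all i, g(closure S) ⊆ closure(X₁)}. -/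
/-!
Given `g` satisfying the closed constraints and `ε > 0`, glue local constants with a partition of
unity: near a point `x` of `T` take some `b ∈ B` close to `g x`, near a point of `closure S` a
point of `X₁` close to `g x`, elsewhere `g x` itself. As `closure S` misses the finite set `T`,
each point has a neighbourhood meeting at most one kind of constraint, and since every constraint
set (a singleton, `X₁` or everything, cut down to the `ε`-ball around `g y`) is convex, the glued
map still satisfies all of them (`exists_continuous_forall_mem_convex_of_local_const`).
-/

open Set Filter Topology Metric

theorem Convex.setOf_imp_mem {E : Type*} [AddCommGroup E] [Module ℝ E] {C : Set E}
    (hC : Convex ℝ C) (p : Prop) : Convex ℝ {v | p → v ∈ C} := by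
  by_cases hp : p <;> simp [hp, hC, convex_univ]

namespace ContinuousMap

variable {Ω X : Type*} [TopologicalSpace Ω] [SeminormedAddCommGroup X]

theorem isClosed_setOf_forall_mem_closure_and_forall_mem_closure (T S : Set Ω) (B X₁ : Set X) :
    IsClosed {g : C(Ω, X) | (∀ x ∈ T, g x ∈ closure B) ∧ ∀ x ∈ S, g x ∈ closure X₁} :=
  (isClosed_setOfPred_mapsTo isClosed_closure T).inter
    (isClosed_setOfPred_mapsTo isClosed_closure S)

theorem eventually_mem_ball_and_constraints [T1Space Ω] {T S : Set Ω} (hT : T.Finite)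
    (hdisj : Disjoint (closure S) T) {X₁ : Set X} (g : C(Ω, X))
    (hgX₁ : ∀ x ∈ closure S, g x ∈ closure X₁) {ε : ℝ} (hε : 0 < ε) (b : Ω → X)
    (hb : ∀ x ∈ T, dist (b x) (g x) < ε / 2) (x : Ω) :
    ∃ c : X, ∀ᶠ y in 𝓝 x,
      c ∈ ball (g y) ε ∩ {v | y ∈ T → v ∈ ({b y} : Set X)} ∩ {v | y ∈ S → v ∈ X₁} := by
  have hT_nhds : x ∉ T → ∀ᶠ y in 𝓝 x, y ∉ T := hT.isClosed.isOpen_compl.mem_nhds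
  have hS_nhds : x ∉ closure S → ∀ᶠ y in 𝓝 x, y ∉ S := fun hx =>
    mem_of_superset (isClosed_closure.isOpen_compl.mem_nhds hx) fun _ hy hyS =>
      hy (subset_closure hyS)
  obtain ⟨c, hcx, hc⟩ : ∃ c, dist c (g x) < ε / 2 ∧
      ∀ᶠ y in 𝓝 x, (y ∈ T → c = b y) ∧ (y ∈ S → c ∈ X₁) := by
    by_cases hxT : x ∈ T
    · have hxS : x ∉ closure S := fun h => hdisj.ne_of_mem h hxT rfl
      have hTx : ∀ᶠ y in 𝓝 x, y ∈ T → y = x :=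
        mem_of_superset ((hT.sdiff (t := {x})).isClosed.isOpen_compl.mem_nhds (by simp))
          fun y hy hyT => not_not.1 fun hne => hy ⟨hyT, hne⟩
      refine ⟨b x, hb x hxT, ?_⟩
      filter_upwards [hTx, hS_nhds hxS] with y hyT hyS
      exact ⟨fun h => by rw [hyT h], fun h => absurd h hyS⟩
    by_cases hxS : x ∈ closure S
    · obtain ⟨c, hcX₁, hcx⟩ := Metric.mem_closure_iff.1 (hgX₁ x hxS) (ε / 2) (half_pos hε)
      refine ⟨c, by rwa [dist_comm], ?_⟩
      filter_upwards [hT_nhds hxT] with y hyT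
      exact ⟨fun h => absurd h hyT, fun _ => hcX₁⟩
    · refine ⟨g x, by simpa using half_pos hε, ?_⟩
      filter_upwards [hT_nhds hxT, hS_nhds hxS] with y hyT hyS
      exact ⟨fun h => absurd h hyT, fun h => absurd h hyS⟩
  refine ⟨c, ?_⟩
  filter_upwards [hc, g.continuous.continuousAt (ball_mem_nhds _ (half_pos hε))] with y hcy hy
  refine ⟨⟨?_, hcy.1⟩, hcy.2⟩
  calc dist c (g y) ≤ dist c (g x) + dist (g y) (g x) := dist_triangle_right _ _ _
    _ < ε / 2 + ε / 2 := add_lt_add hcx hy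
    _ = ε := add_halves ε

variable [NormedSpace ℝ X]

theorem exists_forall_dist_lt_of_forall_mem_closure [T4Space Ω] [ParacompactSpace Ω]
    {T S : Set Ω} (hT : T.Finite) (hdisj : Disjoint (closure S) T) {B X₁ : Set X}
    (hX₁ : Convex ℝ X₁) (g : C(Ω, X)) (hgB : ∀ x ∈ T, g x ∈ closure B)
    (hgX₁ : ∀ x ∈ closure S, g x ∈ closure X₁) {ε : ℝ} (hε : 0 < ε) :
    ∃ h : C(Ω, X), ((∀ x ∈ T, h x ∈ B) ∧ ∀ x ∈ S, h x ∈ X₁) ∧ ∀ x, dist (h x) (g x) < ε := by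
  have hb : ∀ x ∈ T, ∃ v ∈ B, dist v (g x) < ε / 2 := fun x hx => by
    simpa only [dist_comm] using Metric.mem_closure_iff.1 (hgB x hx) (ε / 2) (half_pos hε)
  choose! b hbB hbg using hb
  obtain ⟨h, hh⟩ := exists_continuous_forall_mem_convex_of_local_const
    (fun y => ((convex_ball (g y) ε).inter (convex_singleton (b y) |>.setOf_imp_mem _)).inter
      (hX₁.setOf_imp_mem _))
    (eventually_mem_ball_and_constraints hT hdisj g hgX₁ hε b hbg)
  refine ⟨h, ⟨fun x hx => ?_, fun x hx => (hh x).2 hx⟩, fun x => (hh x).1.1⟩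
  rw [(hh x).1.2 hx]
  exact hbB x hx

theorem closure_setOf_forall_mem_and_forall_mem [CompactSpace Ω] [T2Space Ω] {T S : Set Ω}
    (hT : T.Finite) (hdisj : Disjoint (closure S) T) {B X₁ : Set X} (hX₁ : Convex ℝ X₁) :
    closure {g : C(Ω, X) | (∀ x ∈ T, g x ∈ B) ∧ ∀ x ∈ S, g x ∈ X₁} =
      {g : C(Ω, X) | (∀ x ∈ T, g x ∈ closure B) ∧ ∀ x ∈ closure S, g x ∈ closure X₁} := by
  refine (closure_minimal ?_
    (isClosed_setOf_forall_mem_closure_and_forall_mem_closure ..)).antisymm ?_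
  · rintro g ⟨hgB, hgX₁⟩
    exact ⟨fun x hx => subset_closure (hgB x hx),
      fun x hx => map_mem_closure g.continuous hx hgX₁⟩
  · rintro g ⟨hgB, hgX₁⟩
    refine Metric.mem_closure_iff.2 fun ε hε => ?_
    obtain ⟨h, hK, hdist⟩ :=
      exists_forall_dist_lt_of_forall_mem_closure hT hdisj hX₁ g hgB hgX₁ hε
    exact ⟨h, hK, dist_comm g h ▸ (dist_lt_iff hε).2 hdist⟩

end ContinuousMap

theorem closure_constraint_set_general (Ω X : Type*) [TopologicalSpace Ω] [CompactSpace Ω]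
    [T2Space Ω] [NormedAddCommGroup X] [NormedSpace ℝ X]
    (k : ℕ) (s : Fin k → Ω)
    (B : Set X) (X₁ : Set X) (hX₁ : Convex ℝ X₁)
    (S : Set Ω) (hdisj : closure S ∩ Set.range s = ∅) :
    closure {g : C(Ω, X) | (∀ i, g (s i) ∈ B) ∧ ∀ x ∈ S, g x ∈ X₁} =
      {g : C(Ω, X) | (∀ i, g (s i) ∈ closure B) ∧ ∀ x ∈ closure S, g x ∈ closure X₁} := by
  simpa only [forall_mem_range] using ContinuousMap.closure_setOf_forall_mem_and_forall_mem
    (finite_range s) (disjoint_iff_inter_eq_empty.2 hdisj) hX₁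

/-- Closure of the set of continuous functions constrained to take values in `B` at
finitely many points and in a convex set `X₁` on `S`. -/
theorem closure_constraint_set (Ω X : Type*) [TopologicalSpace Ω] [CompactSpace Ω]
    [T2Space Ω] [NormedAddCommGroup X] [NormedSpace ℝ X] [CompleteSpace X]
    (k : ℕ) (s : Fin k → Ω) (hs : Function.Injective s)
    (B : Set X) (X₁ : Set X) (hX₁ : Convex ℝ X₁)
    (S : Set Ω) (hdisj : closure S ∩ Set.range s = ∅) :
    closure {g : C(Ω, X) | (∀ i, g (s i) ∈ B) ∧ ∀ x ∈ S, g x ∈ X₁} =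
      {g : C(Ω, X) | (∀ i, g (s i) ∈ closure B) ∧ ∀ x ∈ closure S, g x ∈ closure X₁} :=
  closure_constraint_set_general Ω X k s B X₁ hX₁ S hdisj
end

section
/- Let X be a Banach space and A : D(A) ⊆ X → X a linear operator, X₀ = closure(D(A)). Then the uniform closure in C([-1,0], X) of D₁₀ = {φ ∈ C¹([-1,0], X) : φ(0) ∈ D(A), φ'(0) = A φ(0)} equals {φ ∈ C([-1,0], X) : φ(0) ∈ X₀}. -/
/-!
The right-hand side is closed (evaluation at `0` is continuous) and contains `D₁₀`. Conversely,
given `φ` with `φ 0 ∈ closure D(A)`, approximate `φ` uniformly by a `C¹` function `η` and pick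
`x ∈ D(A)` close to `φ 0`. The function `η + (x - η 0) + ζ` then lies in `D₁₀`, where
`ζ t = sin (K t) / K • (A x - η' 0)` corrects the derivative at `0` while being uniformly
`O(1 / K)` small.
-/

open Set
open scoped ContDiff

theorem exists_contDiff_dist_lt_of_continuousMap_Icc {X : Type*} [NormedAddCommGroup X]
    [NormedSpace ℝ X] {a b : ℝ} (hab : a ≤ b) (φ : C(Icc a b, X)) (n : ℕ∞) {ε : ℝ}
    (hε : 0 < ε) : ∃ η : ℝ → X, ContDiff ℝ n η ∧ ∀ t : Icc a b, dist (η t) (φ t) < ε := by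
  obtain ⟨η, hη, hηφ, -⟩ :=
    φ.continuous.Icc_extend' (h := hab).exists_contDiff_approx n continuous_const fun _ ↦ hε
  exact ⟨η, hη, fun t ↦ by simpa only [IccExtend_val] using hηφ t⟩

theorem exists_contDiff_hasDerivAt_norm_le {X : Type*} [NormedAddCommGroup X]
    [NormedSpace ℝ X] (a : ℝ) (v : X) {δ : ℝ} (hδ : 0 < δ) :
    ∃ ζ : ℝ → X, ContDiff ℝ ω ζ ∧ ζ a = 0 ∧ HasDerivAt ζ v a ∧ ∀ t, ‖ζ t‖ ≤ δ := by
  set K := ‖v‖ / δ + 1 with hK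
  have hK0 : 0 < K := by positivity
  refine ⟨fun t ↦ Real.sin (K * (t - a)) • K⁻¹ • v, by fun_prop, by simp, ?_, fun t ↦ ?_⟩
  · have h := ((((hasDerivAt_id a).sub_const a).const_mul K).sin).smul_const (K⁻¹ • v)
    simpa [smul_smul, hK0.ne'] using h
  · calc ‖Real.sin (K * (t - a)) • K⁻¹ • v‖ ≤ 1 * (K⁻¹ * ‖v‖) := by
          rw [norm_smul, norm_smul, Real.norm_eq_abs, norm_inv, Real.norm_of_nonneg hK0.le]
          gcongr
          exact Real.abs_sin_le_one _
      _ ≤ δ := by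
          rw [one_mul, inv_mul_le_iff₀ hK0, hK, add_mul, div_mul_cancel₀ _ hδ.ne']
          linarith

theorem ContDiff.exists_eq_hasDerivAt_norm_sub_le {X : Type*} [NormedAddCommGroup X]
    [NormedSpace ℝ X] {n : WithTop ℕ∞} {η : ℝ → X} (hη : ContDiff ℝ n η) (hn : n ≠ 0) (a : ℝ)
    (x w : X) {δ : ℝ} (hδ : 0 < δ) :
    ∃ ψ : ℝ → X, ContDiff ℝ n ψ ∧ ψ a = x ∧ HasDerivAt ψ w a ∧
      ∀ t, ‖ψ t - η t‖ ≤ ‖x - η a‖ + δ := by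
  obtain ⟨ζ, hζ, hζa, hζ', hζδ⟩ := exists_contDiff_hasDerivAt_norm_le a (w - deriv η a) hδ
  have hη' : HasDerivAt η (deriv η a) a := (hη.differentiable hn a).hasDerivAt
  refine ⟨fun t ↦ η t + (x - η a) + ζ t, (hη.add contDiff_const).add (hζ.of_le le_top),
    by simp [hζa], ?_, fun t ↦ ?_⟩
  · have h := (hη'.add_const (x - η a)).add hζ'
    rwa [add_sub_cancel] at h
  · simp only [add_assoc, add_sub_cancel_left]
    exact (norm_add_le _ _).trans (add_le_add_right (hζδ t) _)

/-- The uniform closure of `{φ ∈ C¹([-1,0],X) : φ(0) ∈ D(A), φ'(0) = Aφ(0)}` in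
`C([-1,0],X)` is `{φ : φ(0) ∈ closure D(A)}`. -/
theorem closure_delay_domain (X : Type*) [NormedAddCommGroup X] [NormedSpace ℝ X]
    (A : X →ₗ.[ℝ] X) :
    closure {φ : C(Set.Icc (-1 : ℝ) 0, X) |
        ∃ ψ : ℝ → X, ContDiffOn ℝ 1 ψ (Set.Icc (-1 : ℝ) 0) ∧
          (∀ t : Set.Icc (-1 : ℝ) 0, φ t = ψ t) ∧
          ∃ h : ψ 0 ∈ A.domain, derivWithin ψ (Set.Icc (-1 : ℝ) 0) 0 = A ⟨ψ 0, h⟩} =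
      {φ : C(Set.Icc (-1 : ℝ) 0, X) |
        φ ⟨0, by norm_num⟩ ∈ closure (A.domain : Set X)} := by
  have h0 : (0 : ℝ) ∈ Icc (-1 : ℝ) 0 := by norm_num
  refine (closure_minimal ?_ ?_).antisymm fun φ hφ ↦ Metric.mem_closure_iff.2 fun ε hε ↦ ?_
  · rintro φ ⟨ψ, -, hφψ, hψ0, -⟩
    rw [mem_ofPred_eq, hφψ]
    exact subset_closure hψ0
  · exact isClosed_closure.preimage (continuous_eval_const _)
  obtain ⟨x, hx, hφx⟩ := Metric.mem_closure_iff.1 hφ (ε / 4) (by positivity)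
  obtain ⟨η, hη, hηφ⟩ := exists_contDiff_dist_lt_of_continuousMap_Icc (by norm_num) φ 1
    (ε := ε / 4) (by positivity)
  obtain ⟨ψ, hψ, rfl, hψ', hψη⟩ := hη.exists_eq_hasDerivAt_norm_sub_le one_ne_zero 0 x
    (A ⟨x, hx⟩) (δ := ε / 4) (by positivity)
  refine ⟨⟨fun t ↦ ψ t, by fun_prop⟩, ⟨ψ, hψ.contDiffOn, fun _ ↦ rfl, hx, ?_⟩, ?_⟩
  · exact hψ'.hasDerivWithinAt.derivWithin (uniqueDiffOn_Icc (by norm_num) 0 h0)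
  refine (ContinuousMap.dist_lt_iff hε).2 fun t ↦ ?_
  have hη0 : dist (η 0) (φ ⟨0, h0⟩) < ε / 4 := hηφ ⟨0, h0⟩
  have hψ0 : ‖ψ 0 - η 0‖ < ε / 2 := calc
    ‖ψ 0 - η 0‖ ≤ dist (φ ⟨0, h0⟩) (ψ 0) + dist (η 0) (φ ⟨0, h0⟩) := by
        rw [← dist_eq_norm, dist_comm (η 0)]; exact dist_triangle_left _ _ _
    _ < ε / 2 := by linarith
  calc dist (φ t) (ψ t) ≤ dist (η t) (φ t) + dist (η t) (ψ t) := dist_triangle_left _ _ _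
    _ = dist (η t) (φ t) + ‖ψ t - η t‖ := by rw [dist_eq_norm' (η t) (ψ t)]
    _ < ε := by linarith [hηφ t, hψη t]
end
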